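/- Let N = ℤ^{2n+3} with standard basis e_{x1}, e_{x2}, e_w, e_{y1},...,e_{yn}, e_{z1},...,e_{zn}, and let m, n ≥ 1. Let L be the subgroup generated by: e_{x1}+e_{x2}+e_{zn}; e_w; e_{yi} for 1 ≤ i ≤ n; e_{zi} for 1 ≤ i ≤ n−1; e_{x1} + Σ_{i=1}^n e_{yi}; and e_{x1} + e_{x2} + m·e_w + Σ_{i=1}^n (mi+1)(e_{yi}+e_{zi}). Then the index [N : L] equals mn. -/

import Mathlib

/-- The ambient lattice `N = ℤ^{2n+3}`, with coordinates
`x₁, x₂, w, y₁, …, yₙ, z₁, …, zₙ`, modelled as `ℤ × ℤ × ℤ × (Fin n → ℤ) × (Fin n → ℤ)`. -/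
abbrev LatticeV (n : ℕ) : Type := ℤ × ℤ × ℤ × (Fin n → ℤ) × (Fin n → ℤ)

/-- The unit vector `e_{x₁}`. -/
def ex1 (n : ℕ) : LatticeV n := (1, 0, 0, 0, 0)
/-- The unit vector `e_{x₂}`. -/
def ex2 (n : ℕ) : LatticeV n := (0, 1, 0, 0, 0)
/-- The unit vector `e_w`. -/
def ew (n : ℕ) : LatticeV n := (0, 0, 1, 0, 0)
/-- The unit vector `e_{yᵢ}` (here `i : Fin n` corresponds to the index `i+1`). -/
def ey (n : ℕ) (i : Fin n) : LatticeV n := (0, 0, 0, Pi.single i 1, 0)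
/-- The unit vector `e_{zᵢ}` (here `i : Fin n` corresponds to the index `i+1`). -/
def ez (n : ℕ) (i : Fin n) : LatticeV n := (0, 0, 0, 0, Pi.single i 1)

/-- `v₂ = e_{x₁} + ∑_{i=1}^n e_{yᵢ}`. -/
def v2 (n : ℕ) : LatticeV n := ex1 n + ∑ i : Fin n, ey n i

/-- `v_nlin = e_{x₁} + e_{x₂} + m·e_w + ∑_{i=1}^n (mi+1)·(e_{yᵢ} + e_{zᵢ})`. -/
def vnlin (m n : ℕ) : LatticeV n :=
  ex1 n + ex2 n + (m : ℤ) • ew n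
    + ∑ i : Fin n, ((m : ℤ) * ((i : ℕ) + 1) + 1) • (ey n i + ez n i)

/-! The surjection `φ : v ↦ z_n - x₂` onto `ℤ` vanishes on every generator of `L` except the last
one, where it takes the value `(mn + 1) - 1 = mn`. Conversely, `e_{x₁}`, `e_{x₂} + e_{zₙ}`, `e_w`,
the `e_{yᵢ}` and the `e_{zᵢ}` with `i < n` lie in `L` and span a complement of `ℤ e_{zₙ}`, so
`v - φ(v) e_{zₙ} ∈ L` for every `v`; with `mn e_{zₙ} ∈ L` this gives `L = φ⁻¹(mnℤ)`, of index `mn`. -/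

open AddSubgroup

theorem AddSubgroup.eq_comap_zmultiples_of_sub_smul_mem {G : Type*} [AddCommGroup G]
    {H : AddSubgroup G} {f : G →+ ℤ} {u : G} {d : ℤ}
    (hle : H ≤ (zmultiples d).comap f) (hsub : ∀ v, v - f v • u ∈ H) (hd : ∃ h ∈ H, f h = d) :
    H = (zmultiples d).comap f := by
  obtain ⟨h, hH, rfl⟩ := hd
  have hdu : f h • u ∈ H := by simpa using sub_mem hH (hsub h)
  refine le_antisymm hle fun v hv => ?_
  obtain ⟨k, hk⟩ := Int.mem_zmultiples_iff.1 hv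
  have hv : v = (v - f v • u) + k • f h • u := by rw [smul_smul, mul_comm, ← hk]; abel
  rw [hv]
  exact add_mem (hsub v) (zsmul_mem hdu k)

namespace LatticeV

variable {n : ℕ}

theorem eq_sum_smul_basis (v : LatticeV n) :
    v = v.1 • ex1 n + v.2.1 • ex2 n + v.2.2.1 • ew n
      + ∑ i, v.2.2.2.1 i • ey n i + ∑ i, v.2.2.2.2 i • ez n i := by
  ext <;>
    simp [ex1, ex2, ew, ey, ez, Prod.fst_sum, Prod.snd_sum, Finset.sum_apply, Pi.single_apply]

theorem eq_top_of_basis_mem {H : AddSubgroup (LatticeV n)} (h1 : ex1 n ∈ H) (h2 : ex2 n ∈ H)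
    (hw : ew n ∈ H) (hy : ∀ i, ey n i ∈ H) (hz : ∀ i, ez n i ∈ H) : H = ⊤ := by
  refine eq_top_iff.2 fun v _ => ?_
  rw [eq_sum_smul_basis v]
  exact add_mem (add_mem (add_mem (add_mem (zsmul_mem h1 _) (zsmul_mem h2 _)) (zsmul_mem hw _))
    (sum_mem fun i _ => zsmul_mem (hy i) _)) (sum_mem fun i _ => zsmul_mem (hz i) _)

def zSubX2 (i : Fin n) : LatticeV n →+ ℤ where
  toFun v := v.2.2.2.2 i - v.2.1
  map_zero' := by simp
  map_add' v w := by simp only [Prod.snd_add, Prod.fst_add, Pi.add_apply]; ring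

section zSubX2

variable (i : Fin n)

@[simp] theorem zSubX2_ex1 : zSubX2 i (ex1 n) = 0 := by simp [zSubX2, ex1]

@[simp] theorem zSubX2_ex2 : zSubX2 i (ex2 n) = -1 := by simp [zSubX2, ex2]

@[simp] theorem zSubX2_ew : zSubX2 i (ew n) = 0 := by simp [zSubX2, ew]

@[simp] theorem zSubX2_ey (j : Fin n) : zSubX2 i (ey n j) = 0 := by simp [zSubX2, ey]

@[simp] theorem zSubX2_ez_self : zSubX2 i (ez n i) = 1 := by simp [zSubX2, ez]

theorem zSubX2_ez_of_ne {j : Fin n} (h : j ≠ i) : zSubX2 i (ez n j) = 0 := by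
  simp [zSubX2, ez, h]

@[simp] theorem zSubX2_v2 : zSubX2 i (v2 n) = 0 := by
  simp [v2, map_sum]

theorem zSubX2_vnlin (m : ℕ) : zSubX2 i (vnlin m n) = m * (i + 1 : ℕ) := by
  simp [zSubX2, vnlin, ex1, ex2, ew, ey, ez, Prod.fst_sum, Prod.snd_sum, Finset.sum_apply,
    Pi.single_apply]

theorem zSubX2_surjective : Function.Surjective (zSubX2 i) :=
  fun k => ⟨k • ez n i, by rw [map_zsmul, zSubX2_ez_self, smul_eq_mul, mul_one]⟩

theorem sub_zSubX2_smul_mem {H : AddSubgroup (LatticeV n)} (h1 : ex1 n ∈ H)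
    (h2 : ex2 n + ez n i ∈ H) (hw : ew n ∈ H) (hy : ∀ j, ey n j ∈ H) (hz : ∀ j ≠ i, ez n j ∈ H)
    (v : LatticeV n) : v - zSubX2 i v • ez n i ∈ H := by
  let ψ : LatticeV n →+ LatticeV n :=
    AddMonoidHom.id _ - (zmultiplesHom _ (ez n i)).comp (zSubX2 i)
  suffices H.comap ψ = ⊤ from (this ▸ mem_top v : v ∈ H.comap ψ)
  apply eq_top_of_basis_mem
  · simpa [ψ] using h1
  · simpa [ψ] using h2
  · simpa [ψ] using hw
  · intro j; simpa [ψ] using hy j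
  · intro j
    by_cases hj : j = i
    · simp [ψ, hj]
    · simpa [ψ, zSubX2_ez_of_ne i hj] using hz j hj

end zSubX2

end LatticeV

open LatticeV in
/-- Let `N = ℤ^{2n+3}` with `m, n ≥ 1`, and let `L` be the subgroup generated
by `e_{x₁}+e_{x₂}+e_{zₙ}`, `e_w`, the `e_{yᵢ}` for `1 ≤ i ≤ n`, the `e_{zᵢ}`
for `1 ≤ i ≤ n−1`, `e_{x₁} + ∑ e_{yᵢ}`, and
`e_{x₁}+e_{x₂}+m·e_w+∑ (mi+1)(e_{yᵢ}+e_{zᵢ})`. Then `[N : L] = mn`. -/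
theorem second_sublattice_index (m n : ℕ) (hn : 1 ≤ n)
    (L : AddSubgroup (LatticeV n))
    (hL : L = AddSubgroup.closure
      ({ex1 n + ex2 n + ez n ⟨n - 1, by omega⟩, ew n}
        ∪ Set.range (ey n)
        ∪ {v | ∃ i : Fin n, (i : ℕ) + 1 < n ∧ v = ez n i}
        ∪ {v2 n, vnlin m n})) :
    L.index = m * n := by
  set last : Fin n := ⟨n - 1, by omega⟩
  have hlast {i : Fin n} : (i : ℕ) + 1 < n ↔ i ≠ last := by
    simp only [last, ne_eq, Fin.ext_iff]; omega
  have hvnlin : zSubX2 last (vnlin m n) = m * n := by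
    rw [zSubX2_vnlin, Nat.sub_add_cancel hn]
  have hg : ex1 n + ex2 n + ez n last ∈ L := hL ▸ subset_closure (by simp)
  have hw : ew n ∈ L := hL ▸ subset_closure (by simp)
  have hy : ∀ i, ey n i ∈ L := fun i => hL ▸ subset_closure (by simp)
  have hz : ∀ i ≠ last, ez n i ∈ L := fun i hi =>
    hL ▸ subset_closure (.inl (.inr ⟨i, hlast.2 hi, rfl⟩))
  have hv2 : v2 n ∈ L := hL ▸ subset_closure (by simp)
  have hx1 : ex1 n ∈ L := by simpa [v2] using sub_mem hv2 (sum_mem (t := .univ) fun i _ => hy i)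
  have hx2 : ex2 n + ez n last ∈ L := by simpa [add_assoc] using sub_mem hg hx1
  have hle : L ≤ (zmultiples ((m : ℤ) * n)).comap (zSubX2 last) := by
    rw [hL, closure_le]
    rintro v ((((rfl | rfl) | ⟨i, rfl⟩) | ⟨i, hi, rfl⟩) | (rfl | rfl))
    · simp
    · simp
    · simp
    · simp [zSubX2_ez_of_ne _ (hlast.1 hi)]
    · simp
    · simp [hvnlin]
  rw [eq_comap_zmultiples_of_sub_smul_mem hle (sub_zSubX2_smul_mem last hx1 hx2 hw hy hz)
      ⟨vnlin m n, hL ▸ subset_closure (by simp), hvnlin⟩,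
    index_comap_of_surjective _ (zSubX2_surjective last), Int.index_zmultiples, Int.natAbs_mul,
    Int.natAbs_natCast, Int.natAbs_natCast]
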